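/- Let n ≥ 1, δ ∈ (0, 1), V > 0. Let Σ be an n×n real positive definite matrix and, for each t ∈ {1, …, n}, let Σ'_t be an n×n real positive definite matrix. Let C₀ be a real number with C₀ ≥ 1/λ_min(Σ) + 1/λ_min(Σ'_t) for all t. Let t₀ ∈ {1, …, n} and let X be a random vector in ℝⁿ with E[X] = 0, covariance matrix Σ'_{t₀}, and almost surely X_i ∈ [−V, V] for all i. For each t let Z_t = XᵀΣ^{-1}X − Xᵀ(Σ'_t)^{-1}X + ln(det Σ / det Σ'_t), and let 2𝔏 = max_{t ∈ {1,…,n}} Z_t. Then P( 2𝔏 ≤ min_t ( Tr(Σ'_t Σ^{-1}) − n + ln(det Σ / det Σ'_t) ) − C₀ V² n √(0.5 · ln(2/δ)) ) ≤ δ/2. -/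

import Mathlib

open Matrix MeasureTheory

/-- The smallest eigenvalue of a real symmetric matrix, as the infimum of its spectrum. -/
noncomputable def lamMin {n : ℕ} (M : Matrix (Fin n) (Fin n) ℝ) : ℝ := sInf (spectrum ℝ M)

/-!
Only the true break point `t₀` is needed: `Z_{t₀} ≤ 2𝔏` and the minimum is at most its `t₀`-th
term, so on the event the variable `Y = XᵀΣ⁻¹X − Xᵀ(Σ'_{t₀})⁻¹X` falls at least
`ε = C₀V²n√(½ ln(2/δ))` below its mean `Tr(Σ'_{t₀}Σ⁻¹) − n` (the mean because
`𝔼[XXᵀ] = Σ'_{t₀}`, the log-determinants cancel). Since `0 ≤ xᵀM⁻¹x ≤ |x|²/λ_min(M)` and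
`|X|² ≤ nV²`, `Y` lives in an interval of length at most `C₀V²n`, and Hoeffding's inequality
bounds the probability by `δ/2`.
-/

lemma le_sub_of_ciSup_le_ciInf_sub {ι : Type*} [Finite ι] {f g : ι → ℝ} {ε : ℝ}
    (h : ⨆ t, f t ≤ (⨅ t, g t) - ε) (t₀ : ι) : f t₀ ≤ g t₀ - ε := by
  have := le_ciSup (Finite.bddAbove_range f) t₀
  have := ciInf_le (Finite.bddBelow_range g) t₀
  linarith

namespace Matrix

variable {n : ℕ} {M : Matrix (Fin n) (Fin n) ℝ}

lemma lamMin_le_of_mem_spectrum {x : ℝ} (hx : x ∈ spectrum ℝ M) : lamMin M ≤ x :=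
  csInf_le M.finite_real_spectrum.bddBelow hx

lemma PosDef.lamMin_pos [NeZero n] (hM : M.PosDef) : 0 < lamMin M := by
  rw [lamMin, hM.isHermitian.spectrum_real_eq_range_eigenvalues]
  obtain ⟨i, hi⟩ := (Set.range_nonempty _).csInf_mem (Set.finite_range hM.isHermitian.eigenvalues)
  exact hi ▸ hM.eigenvalues_pos i

lemma inv_mem_spectrum_of_mem_spectrum_inv (hM : IsUnit M) {y : ℝ}
    (hy : y ∈ spectrum ℝ M⁻¹) : y⁻¹ ∈ spectrum ℝ M := by
  obtain ⟨u, rfl⟩ := hM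
  rwa [← coe_units_inv, ← spectrum.map_inv] at hy

open scoped MatrixOrder in
lemma PosDef.inv_le_algebraMap_inv_lamMin [NeZero n] (hM : M.PosDef) :
    M⁻¹ ≤ algebraMap ℝ _ (lamMin M)⁻¹ := by
  rw [le_algebraMap_iff_spectrum_le hM.inv.isHermitian.isSelfAdjoint]
  intro y hy
  have hle := lamMin_le_of_mem_spectrum (inv_mem_spectrum_of_mem_spectrum_inv hM.isUnit hy)
  have hy_pos : 0 < y := inv_pos.1 (hM.lamMin_pos.trans_le hle)
  exact (le_inv_comm₀ hy_pos hM.lamMin_pos).2 hle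

open scoped MatrixOrder in
lemma PosDef.dotProduct_mulVec_inv_le [NeZero n] (hM : M.PosDef) (x : Fin n → ℝ) :
    x ⬝ᵥ M⁻¹ *ᵥ x ≤ (x ⬝ᵥ x) / lamMin M := by
  have := (Matrix.le_iff.1 hM.inv_le_algebraMap_inv_lamMin).dotProduct_mulVec_nonneg x
  simp only [star_trivial, Algebra.algebraMap_eq_smul_one, sub_mulVec, smul_mulVec, one_mulVec,
    dotProduct_sub, dotProduct_smul, smul_eq_mul, sub_nonneg] at this
  rwa [div_eq_inv_mul]

lemma PosDef.dotProduct_mulVec_inv_sub_mem_Icc [NeZero n] {A B : Matrix (Fin n) (Fin n) ℝ}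
    (hA : A.PosDef) (hB : B.PosDef) {x : Fin n → ℝ} {c : ℝ} (hx : x ⬝ᵥ x ≤ c) :
    x ⬝ᵥ A⁻¹ *ᵥ x - x ⬝ᵥ B⁻¹ *ᵥ x ∈ Set.Icc (-(c / lamMin B)) (c / lamMin A) := by
  have hA_nonneg := hA.inv.posSemidef.dotProduct_mulVec_nonneg x
  have hB_nonneg := hB.inv.posSemidef.dotProduct_mulVec_nonneg x
  have hA_le := (hA.dotProduct_mulVec_inv_le x).trans <|
    div_le_div_of_nonneg_right hx hA.lamMin_pos.le
  have hB_le := (hB.dotProduct_mulVec_inv_le x).trans <|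
    div_le_div_of_nonneg_right hx hB.lamMin_pos.le
  rw [star_trivial] at hA_nonneg hB_nonneg
  constructor <;> linarith

end Matrix

lemma dotProduct_self_le_of_abs_le {ι : Type*} [Fintype ι] {x : ι → ℝ} {V : ℝ}
    (hx : ∀ i, |x i| ≤ V) : x ⬝ᵥ x ≤ Fintype.card ι * V ^ 2 := by
  calc x ⬝ᵥ x = ∑ i, |x i| * |x i| := by simp only [dotProduct, abs_mul_abs_self]
    _ ≤ ∑ _i : ι, V ^ 2 := by
        gcongr with i
        rw [sq]
        exact mul_self_le_mul_self (abs_nonneg _) (hx i)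
    _ = Fintype.card ι * V ^ 2 := by simp

lemma integrable_mul_apply_of_ae_mem_Icc {Ω ι : Type*} [MeasurableSpace Ω] {μ : Measure Ω}
    [IsFiniteMeasure μ] {X : Ω → ι → ℝ} (hX : Measurable X) {V : ℝ}
    (hbdd : ∀ᵐ ω ∂μ, ∀ i, X ω i ∈ Set.Icc (-V) V) (i j : ι) :
    Integrable (fun ω => X ω i * X ω j) μ :=
  Integrable.of_bound (by fun_prop) (V * V) <| by
    filter_upwards [hbdd] with ω hω
    have hi := abs_le.2 (hω i)
    rw [norm_mul]
    exact mul_le_mul hi (abs_le.2 (hω j)) (norm_nonneg _) ((abs_nonneg _).trans hi)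

section QuadraticForm

variable {Ω ι : Type*} [Fintype ι] [MeasurableSpace Ω] {μ : Measure Ω} {X : Ω → ι → ℝ}

lemma dotProduct_mulVec_eq_sum_mul (x : ι → ℝ) (M : Matrix ι ι ℝ) :
    x ⬝ᵥ M *ᵥ x = ∑ i, ∑ j, M i j * (x i * x j) := by
  simp only [dotProduct, mulVec, Finset.mul_sum]
  exact Finset.sum_congr rfl fun i _ => Finset.sum_congr rfl fun j _ => by ring

lemma integrable_dotProduct_mulVec (hint : ∀ i j, Integrable (fun ω => X ω i * X ω j) μ)
    (M : Matrix ι ι ℝ) : Integrable (fun ω => X ω ⬝ᵥ M *ᵥ X ω) μ := by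
  simp only [dotProduct_mulVec_eq_sum_mul]
  exact integrable_finsetSum _ fun i _ => integrable_finsetSum _ fun j _ => (hint i j).const_mul _

lemma integral_dotProduct_mulVec {C : Matrix ι ι ℝ}
    (hint : ∀ i j, Integrable (fun ω => X ω i * X ω j) μ)
    (hC : ∀ i j, ∫ ω, X ω i * X ω j ∂μ = C i j) (M : Matrix ι ι ℝ) :
    ∫ ω, X ω ⬝ᵥ M *ᵥ X ω ∂μ = (M * Cᵀ).trace := by
  have hint_row (i : ι) : Integrable (fun ω => ∑ j, M i j * (X ω i * X ω j)) μ :=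
    integrable_finsetSum _ fun j _ => (hint i j).const_mul _
  simp only [dotProduct_mulVec_eq_sum_mul, integral_finsetSum _ fun i _ => hint_row i,
    integral_finsetSum _ fun j _ => (hint _ j).const_mul _, integral_const_mul, hC]
  simp [trace, mul_apply]

lemma integral_dotProduct_mulVec_sub_inv [DecidableEq ι] {C : Matrix ι ι ℝ} (hCs : C.IsSymm)
    (hCu : IsUnit C.det) (hint : ∀ i j, Integrable (fun ω => X ω i * X ω j) μ)
    (hC : ∀ i j, ∫ ω, X ω i * X ω j ∂μ = C i j) (A : Matrix ι ι ℝ) :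
    ∫ ω, (X ω ⬝ᵥ A *ᵥ X ω - X ω ⬝ᵥ C⁻¹ *ᵥ X ω) ∂μ = (C * A).trace - Fintype.card ι := by
  rw [integral_sub (integrable_dotProduct_mulVec hint _) (integrable_dotProduct_mulVec hint _),
    integral_dotProduct_mulVec hint hC, integral_dotProduct_mulVec hint hC, hCs.eq,
    trace_mul_comm A, nonsing_inv_mul _ hCu, trace_one]

end QuadraticForm

section Hoeffding

open ProbabilityTheory

variable {Ω : Type*} [MeasurableSpace Ω] {μ : Measure Ω} [IsProbabilityMeasure μ]

lemma measureReal_le_integral_sub_le_of_mem_Icc {Y : Ω → ℝ} {a b ε : ℝ} (hY : AEMeasurable Y μ)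
    (hab : ∀ᵐ ω ∂μ, Y ω ∈ Set.Icc a b) (hε : 0 ≤ ε) :
    μ.real {ω | Y ω ≤ μ[Y] - ε} ≤ Real.exp (-2 * ε ^ 2 / (b - a) ^ 2) := by
  convert (hasSubgaussianMGF_of_mem_Icc hY hab).neg.measure_ge_le hε using 2
  · ext ω
    simp only [Pi.neg_apply, neg_sub, le_sub_comm]
  · simp only [NNReal.coe_pow, NNReal.coe_div, coe_nnnorm, Real.norm_eq_abs, div_pow, sq_abs,
      NNReal.coe_ofNat]
    generalize b - a = d
    ring

lemma exp_neg_two_mul_sq_div_sq_le {η w L : ℝ} (hη : 0 < η) (hη₁ : η ≤ 1) (hw : 0 < w)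
    (hwL : w ≤ L) :
    Real.exp (-2 * (L * Real.sqrt (0.5 * Real.log (1 / η))) ^ 2 / w ^ 2) ≤ η := by
  have hlog : 0 ≤ Real.log (1 / η) := Real.log_nonneg (one_le_one_div hη hη₁)
  have hLw : 1 ≤ L ^ 2 / w ^ 2 :=
    (one_le_div (by positivity)).2 (pow_le_pow_left₀ hw.le hwL 2)
  calc Real.exp (-2 * (L * Real.sqrt (0.5 * Real.log (1 / η))) ^ 2 / w ^ 2)
      = Real.exp (-(L ^ 2 / w ^ 2) * Real.log (1 / η)) := by
        rw [mul_pow, Real.sq_sqrt (by positivity)]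
        ring_nf
    _ ≤ Real.exp (-Real.log (1 / η)) := by
        gcongr
        nlinarith
    _ = η := by rw [Real.exp_neg, Real.exp_log (by positivity), one_div, inv_inv]

end Hoeffding

theorem glrt_type_two_error_general
    {Ω : Type*} [MeasurableSpace Ω] (P : Measure Ω) [IsProbabilityMeasure P]
    {n : ℕ} (hn : 1 ≤ n) (δ V : ℝ) (hδ : δ ∈ Set.Ioo (0 : ℝ) 1) (hV : 0 < V)
    (S : Matrix (Fin n) (Fin n) ℝ) (hS : S.PosDef)
    (S' : Fin n → Matrix (Fin n) (Fin n) ℝ) (hS' : ∀ t, (S' t).PosDef)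
    (C₀ : ℝ) (hC₀ : ∀ t, 1 / lamMin S + 1 / lamMin (S' t) ≤ C₀)
    (t₀ : Fin n)
    (X : Ω → Fin n → ℝ) (hX : Measurable X)
    (hcov : ∀ i j, ∫ ω, X ω i * X ω j ∂P = S' t₀ i j)
    (hbdd : ∀ᵐ ω ∂P, ∀ i, X ω i ∈ Set.Icc (-V) V) :
    P {ω | (⨆ t : Fin n, (X ω ⬝ᵥ S⁻¹.mulVec (X ω) - X ω ⬝ᵥ (S' t)⁻¹.mulVec (X ω)
            + Real.log (S.det / (S' t).det)))
          ≤ (⨅ t : Fin n, ((S' t * S⁻¹).trace - (n : ℝ) + Real.log (S.det / (S' t).det)))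
            - C₀ * V ^ 2 * n * Real.sqrt (0.5 * Real.log (2 / δ))}
      ≤ ENNReal.ofReal (δ / 2) := by
  have : NeZero n := ⟨by omega⟩
  set ε := C₀ * V ^ 2 * n * Real.sqrt (0.5 * Real.log (2 / δ))
  set Y : Ω → ℝ := fun ω => X ω ⬝ᵥ S⁻¹ *ᵥ X ω - X ω ⬝ᵥ (S' t₀)⁻¹ *ᵥ X ω
  have hint := integrable_mul_apply_of_ae_mem_Icc hX hbdd
  have hY_mean : ∫ ω, Y ω ∂P = (S' t₀ * S⁻¹).trace - n := by
    simpa using integral_dotProduct_mulVec_sub_inv (isHermitian_iff_isSymm.1 (hS' t₀).isHermitian)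
      (hS' t₀).det_pos.ne'.isUnit hint hcov S⁻¹
  have hY_mem :
      ∀ᵐ ω ∂P, Y ω ∈ Set.Icc (-(n * V ^ 2 / lamMin (S' t₀))) (n * V ^ 2 / lamMin S) := by
    filter_upwards [hbdd] with ω hω
    refine hS.dotProduct_mulVec_inv_sub_mem_Icc (hS' t₀) ?_
    simpa using dotProduct_self_le_of_abs_le fun i => abs_le.2 (hω i)
  have hS_pos := hS.lamMin_pos
  have hS'_pos := (hS' t₀).lamMin_pos
  have hwidth : n * V ^ 2 / lamMin S - -(n * V ^ 2 / lamMin (S' t₀)) ≤ C₀ * V ^ 2 * n :=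
    calc _ = n * V ^ 2 * (1 / lamMin S + 1 / lamMin (S' t₀)) := by ring
      _ ≤ n * V ^ 2 * C₀ := by gcongr; exact hC₀ t₀
      _ = C₀ * V ^ 2 * n := by ring
  have hε : 0 ≤ ε := by
    have : 0 ≤ C₀ := le_trans (by positivity) (hC₀ t₀)
    positivity
  refine (measure_mono (t := {ω | Y ω ≤ ∫ ω, Y ω ∂P - ε}) fun ω hω => ?_).trans ?_
  · have := le_sub_of_ciSup_le_ciInf_sub hω t₀
    simp only [Set.mem_ofPred_eq, hY_mean, Y]
    linarith
  rw [← ofReal_measureReal]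
  refine ENNReal.ofReal_le_ofReal <|
    (measureReal_le_integral_sub_le_of_mem_Icc (by fun_prop) hY_mem hε).trans ?_
  have := exp_neg_two_mul_sq_div_sq_le (η := δ / 2) (by linarith [hδ.1]) (by linarith [hδ.2])
    (by rw [sub_neg_eq_add]; positivity) hwidth
  rwa [one_div_div] at this

/-- **Lemma 4 of the paper.** Under the alternative hypothesis (mean `0`, covariance
`Σ'_{t₀}`, entries a.s. bounded by `V`), the generalized likelihood ratio `2𝔏 = max_t Z_t`
with `Z_t = XᵀΣ⁻¹X − Xᵀ(Σ'_t)⁻¹X + ln(det Σ / det Σ'_t)` falls below the threshold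
`min_t (Tr(Σ'_t Σ⁻¹) − n + ln(det Σ / det Σ'_t)) − C₀V²n√(0.5 ln(2/δ))`
with probability at most `δ/2`. -/
theorem glrt_type_two_error
    {Ω : Type*} [MeasurableSpace Ω] (P : Measure Ω) [IsProbabilityMeasure P]
    {n : ℕ} (hn : 1 ≤ n) (δ V : ℝ) (hδ : δ ∈ Set.Ioo (0 : ℝ) 1) (hV : 0 < V)
    (S : Matrix (Fin n) (Fin n) ℝ) (hS : S.PosDef)
    (S' : Fin n → Matrix (Fin n) (Fin n) ℝ) (hS' : ∀ t, (S' t).PosDef)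
    (C₀ : ℝ) (hC₀ : ∀ t, 1 / lamMin S + 1 / lamMin (S' t) ≤ C₀)
    (t₀ : Fin n)
    (X : Ω → Fin n → ℝ) (hX : Measurable X)
    (hmean : ∀ i, ∫ ω, X ω i ∂P = 0)
    (hcov : ∀ i j, ∫ ω, X ω i * X ω j ∂P = S' t₀ i j)
    (hbdd : ∀ᵐ ω ∂P, ∀ i, X ω i ∈ Set.Icc (-V) V) :
    P {ω | (⨆ t : Fin n, (X ω ⬝ᵥ S⁻¹.mulVec (X ω) - X ω ⬝ᵥ (S' t)⁻¹.mulVec (X ω)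
            + Real.log (S.det / (S' t).det)))
          ≤ (⨅ t : Fin n, ((S' t * S⁻¹).trace - (n : ℝ) + Real.log (S.det / (S' t).det)))
            - C₀ * V ^ 2 * n * Real.sqrt (0.5 * Real.log (2 / δ))}
      ≤ ENNReal.ofReal (δ / 2) :=
  glrt_type_two_error_general P hn δ V hδ hV S hS S' hS' C₀ hC₀ t₀ X hX hcov hbdd
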